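/- arXiv:0901.2061 — 6 statements merged into one kernel-verified Lean document; each statement's English description precedes it below -/
import Mathlib

section
/- Let r ≥ 3 and let G be an r-graph on n vertices with independent neighborhoods (i.e., containing no copy of F_r). Then G has an independent set of size at least n^{1/r}. -/
/-- `E` is the edge set of an `r`-uniform hypergraph: every edge has exactly `r` vertices. -/
def IsRGraph (r : ℕ) {V : Type*} (E : Finset (Finset V)) : Prop :=
  ∀ e ∈ E, e.card = r

/-- `I` is an independent set of the hypergraph with edge set `E`:
no edge with at least two vertices is contained in `I`. -/
def HypIndep {V : Type*} (E : Finset (Finset V)) (I : Finset V) : Prop :=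
  ∀ e ∈ E, 2 ≤ e.card → ¬ e ⊆ I

/-- The `r`-graph `E` contains a copy of `F_r`: there are disjoint sets `A` (of size `r-1`)
and `B` (of size `r`) such that `B` is an edge and `A ∪ {b}` is an edge for every `b ∈ B`. -/
def HasFr (r : ℕ) {V : Type*} [DecidableEq V] (E : Finset (Finset V)) : Prop :=
  ∃ A B : Finset V, Disjoint A B ∧ A.card = r - 1 ∧ B.card = r ∧
    B ∈ E ∧ ∀ b ∈ B, insert b A ∈ E

/-- **Lemma.** Let `r ≥ 3` and let `G` be an `n`-vertex `r`-graph with independent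
neighborhoods (no copy of `F_r`). Then `G` has an independent set of size at least `n^(1/r)`. -/
theorem indep_neighborhoods_indep_set {V : Type} [Fintype V] [DecidableEq V]
    (r : ℕ) (hr : 3 ≤ r) (E : Finset (Finset V)) (hE : IsRGraph r E)
    (hfree : ¬ HasFr r E) :
    ∃ I : Finset V, HypIndep E I ∧ ((Fintype.card V : ℝ)) ^ (1 / (r : ℝ)) ≤ (I.card : ℝ) := by
  classical
  set S : Finset (Finset V) := Finset.univ.filter (fun I => HypIndep E I) with hS
  have hSne : S.Nonempty := by
    refine ⟨∅, ?_⟩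
    simp only [hS, Finset.mem_filter, Finset.mem_univ, true_and]
    intro e _ hce hsub
    rw [Finset.subset_empty] at hsub
    subst hsub
    simp at hce
  obtain ⟨I, hIS, hmax⟩ := S.exists_max_image Finset.card hSne
  have hI : HypIndep E I := by
    simpa [hS] using hIS
  refine ⟨I, hI, ?_⟩
  set t := I.card with ht
  have hmax' : ∀ J : Finset V, HypIndep E J → J.card ≤ t := fun J hJ =>
    hmax J (by simp [hS, hJ])
  set N : Finset V → Finset V := fun A => Finset.univ.filter (fun b => insert b A ∈ E) with hN
  -- neighborhoods are independent, hence small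
  have hNle : ∀ A : Finset V, A.card = r - 1 → (N A).card ≤ t := by
    intro A hA
    apply hmax'
    intro e he hce hsub
    apply hfree
    have hmem : ∀ b ∈ e, insert b A ∈ E := by
      intro b hb
      have := hsub hb
      simpa [hN] using this
    refine ⟨A, e, ?_, hA, hE e he, he, hmem⟩
    rw [Finset.disjoint_right]
    intro b hb hbA
    have h1 := hE _ (hmem b hb)
    rw [Finset.insert_eq_self.2 hbA] at h1
    omega
  -- cover
  have hcover : (Finset.univ : Finset V) ⊆ I ∪ (I.powersetCard (r-1)).biUnion N := by
    intro v _
    by_cases hvI : v ∈ I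
    · exact Finset.mem_union_left _ hvI
    · have hnot : ¬ HypIndep E (insert v I) := by
        intro h
        have := hmax' _ h
        rw [Finset.card_insert_of_notMem hvI] at this
        omega
      simp only [HypIndep] at hnot
      push_neg at hnot
      obtain ⟨e, he, hce, hsub⟩ := hnot
      have hve : v ∈ e := by
        by_contra hve
        exact hI e he hce (fun x hx =>
          (Finset.mem_insert.1 (hsub hx)).resolve_left (by rintro rfl; exact hve hx))
      apply Finset.mem_union_right
      apply Finset.mem_biUnion.2
      refine ⟨e.erase v, ?_, ?_⟩
      · rw [Finset.mem_powersetCard]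
        constructor
        · intro x hx
          have hx' := Finset.mem_erase.1 hx
          rcases Finset.mem_insert.1 (hsub hx'.2) with h | h
          · exact absurd h hx'.1
          · exact h
        · rw [Finset.card_erase_of_mem hve, hE e he]
      · simp [hN, Finset.insert_erase hve, he]
  -- counting
  have hcount : Fintype.card V ≤ t + (t.choose (r-1)) * t := by
    have h1 : Fintype.card V ≤ (I ∪ (I.powersetCard (r-1)).biUnion N).card := by
      rw [← Finset.card_univ]
      exact Finset.card_le_card hcover
    have h2 := Finset.card_union_le I ((I.powersetCard (r-1)).biUnion N)
    have h3 := Finset.card_biUnion_le (s := I.powersetCard (r-1)) (t := N)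
    have h4 : ∑ A ∈ I.powersetCard (r-1), (N A).card ≤ (I.powersetCard (r-1)).card * t := by
      have := Finset.sum_le_card_nsmul (I.powersetCard (r-1)) (fun A => (N A).card) t
        (fun A hA => hNle A (Finset.mem_powersetCard.1 hA).2)
      simpa using this
    rw [Finset.card_powersetCard] at h4
    calc Fintype.card V ≤ _ := h1
      _ ≤ I.card + ((I.powersetCard (r-1)).biUnion N).card := h2
      _ ≤ t + (t.choose (r-1)) * t := by
          refine Nat.add_le_add le_rfl (le_trans h3 ?_)
          exact h4
  -- numeric bound : n ≤ t ^ r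
  have hnt : Fintype.card V ≤ t ^ r := by
    rcases Nat.lt_or_ge t 2 with h2 | h2
    · interval_cases t
      · have : Fintype.card V = 0 := by omega
        simp [this]
      · have hc : Nat.choose 1 (r-1) = 0 := Nat.choose_eq_zero_of_lt (by omega)
        rw [hc] at hcount
        simpa using hcount
    · have hf : 2 ≤ Nat.factorial (r-1) := le_trans (by omega) (Nat.self_le_factorial (r-1))
      have hA : t.choose (r-1) * 2 ≤ t^(r-1) := by
        calc t.choose (r-1) * 2 ≤ t.choose (r-1) * Nat.factorial (r-1) := Nat.mul_le_mul_left _ hf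
          _ = t.descFactorial (r-1) := by
              rw [Nat.descFactorial_eq_factorial_mul_choose, Nat.mul_comm]
          _ ≤ t^(r-1) := Nat.descFactorial_le_pow _ _
      have hB : 2 ≤ t^(r-1) := le_trans h2 (Nat.le_self_pow (by omega) t)
      have hpow : t^r = t^(r-1) * t := by
        rw [← pow_succ]
        congr 1
        omega
      have hAt : t.choose (r-1) * 2 * t ≤ t^(r-1) * t := Nat.mul_le_mul_right t hA
      have hBt : 2 * t ≤ t^(r-1) * t := Nat.mul_le_mul_right t hB
      nlinarith [hcount, hAt, hBt, hpow]
  -- real conversion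
  have hr0 : (0:ℝ) < (r:ℝ) := by positivity
  have h1 : (Fintype.card V : ℝ) ≤ (t:ℝ)^(r:ℕ) := by exact_mod_cast hnt
  calc ((Fintype.card V : ℝ)) ^ (1 / (r : ℝ))
      ≤ ((t:ℝ)^(r:ℕ)) ^ (1 / (r : ℝ)) := by
        apply Real.rpow_le_rpow (by positivity) h1 (by positivity)
    _ = (t:ℝ) := by
        rw [← Real.rpow_natCast (t:ℝ) r, ← Real.rpow_mul (by positivity),
          mul_one_div_cancel (ne_of_gt hr0), Real.rpow_one]
end

section
/- Let 0 < α ≤ 1/2 and let G be a hypergraph on n vertices. Suppose that every subhypergraph P of G (including G itself) with m vertices has an independent set of size at least m^α. Then the chromatic number of G is at most 2 n^{1−α}. -/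
/-- `f` is a proper coloring of the hypergraph with edge set `E`:
no edge with at least two vertices is monochromatic. -/
def IsProperColoring {V : Type*} (E : Finset (Finset V)) {k : ℕ} (f : V → Fin k) : Prop :=
  ∀ e ∈ E, 2 ≤ e.card → ∃ u ∈ e, ∃ v ∈ e, f u ≠ f v

/-- The hypergraph with edge set `E` is properly `k`-colorable,
i.e. its chromatic number is at most `k`. -/
def HypColorable {V : Type*} (E : Finset (Finset V)) (k : ℕ) : Prop :=
  ∃ f : V → Fin k, IsProperColoring E f

lemma key_ineq {α m : ℝ} (hα0 : 0 < α) (hα : α ≤ 1/2) (hm : 1 ≤ m) :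
    2 * (m - m ^ α) ^ (1 - α) + 1 ≤ 2 * m ^ (1 - α) := by
  have hm0 : 0 < m := lt_of_lt_of_le one_pos hm
  have hs1 : m ^ (α - 1) ≤ 1 :=
    Real.rpow_le_one_of_one_le_of_nonpos hm (by linarith)
  have hs0 : 0 ≤ m ^ (α - 1) := Real.rpow_nonneg hm0.le _
  have hfac : m - m ^ α = m * (1 + (-(m ^ (α - 1)))) := by
    have : m * m ^ (α - 1) = m ^ α := by
      nth_rewrite 1 [← Real.rpow_one m]
      rw [← Real.rpow_add hm0]; norm_num
    rw [mul_add, mul_one, mul_neg, this]; ring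
  have hbern : (1 + (-(m ^ (α - 1)))) ^ (1 - α) ≤ 1 + (1 - α) * (-(m ^ (α - 1))) :=
    rpow_one_add_le_one_add_mul_self (by linarith) (by linarith) (by linarith)
  have hmul : (m - m ^ α) ^ (1 - α) ≤ m ^ (1 - α) * (1 + (1 - α) * (-(m ^ (α - 1)))) := by
    rw [hfac, Real.mul_rpow hm0.le (by linarith)]
    exact mul_le_mul_of_nonneg_left hbern (Real.rpow_nonneg hm0.le _)
  have hcancel : m ^ (1 - α) * m ^ (α - 1) = 1 := by
    rw [← Real.rpow_add hm0]; norm_num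
  have hfin : m ^ (1 - α) * (1 + (1 - α) * (-(m ^ (α - 1)))) = m ^ (1 - α) - (1 - α) := by
    nlinarith [hcancel]
  rw [hfin] at hmul
  linarith

lemma aux_peel {V : Type} [DecidableEq V]
    (E : Finset (Finset V)) (α : ℝ) (hα0 : 0 < α) (hα : α ≤ 1 / 2)
    (h : ∀ S : Finset V, ∃ I ⊆ S, HypIndep E I ∧ ((S.card : ℝ)) ^ α ≤ (I.card : ℝ)) :
    ∀ n : ℕ, ∀ S : Finset V, S.card ≤ n →
      ∃ k : ℕ, (k : ℝ) ≤ 2 * (S.card : ℝ) ^ (1 - α) ∧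
        ∃ f : V → ℕ, (∀ v ∈ S, f v < k) ∧
          ∀ e ∈ E, 2 ≤ e.card → e ⊆ S → ∃ u ∈ e, ∃ w ∈ e, f u ≠ f w := by
  intro n
  induction n with
  | zero =>
    intro S hS
    have hSe : S = ∅ := Finset.card_eq_zero.mp (Nat.le_zero.mp hS)
    subst hSe
    refine ⟨0, by simp [Real.zero_rpow (by linarith : (1:ℝ) - α ≠ 0)], fun _ => 0, by simp, ?_⟩
    intro e _ he hsub
    have : e = ∅ := Finset.subset_empty.mp hsub
    simp [this] at he
  | succ n ih =>
    intro S hS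
    by_cases hSe : S = ∅
    · subst hSe
      refine ⟨0, by simp [Real.zero_rpow (by linarith : (1:ℝ) - α ≠ 0)], fun _ => 0, by simp, ?_⟩
      intro e _ he hsub
      have : e = ∅ := Finset.subset_empty.mp hsub
      simp [this] at he
    · obtain ⟨I, hIS, hind, hIcard⟩ := h S
      have hm1 : 1 ≤ S.card := Finset.card_pos.mpr (Finset.nonempty_of_ne_empty hSe)
      have hm1' : (1 : ℝ) ≤ (S.card : ℝ) := by exact_mod_cast hm1
      have hpow1 : (1 : ℝ) ≤ (S.card : ℝ) ^ α := Real.one_le_rpow hm1' hα0.le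
      have hI1 : 1 ≤ I.card := by
        by_contra hc
        push_neg at hc
        have h0 : I.card = 0 := by omega
        rw [h0] at hIcard
        norm_num at hIcard
        linarith
      set S' := S \ I with hS'
      have hcardS' : S'.card = S.card - I.card := Finset.card_sdiff_of_subset hIS
      have hIleS : I.card ≤ S.card := Finset.card_le_card hIS
      have hS'n : S'.card ≤ n := by omega
      obtain ⟨k, hk, f, hf, hprop⟩ := ih S' hS'n
      refine ⟨k + 1, ?_, fun v => if v ∈ I then k else f v, ?_, ?_⟩
      · -- numeric bound
        have hcast : (S'.card : ℝ) = (S.card : ℝ) - (I.card : ℝ) := by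
          rw [hcardS']; push_cast [Nat.cast_sub hIleS]; ring
        have h1 : (S'.card : ℝ) ≤ (S.card : ℝ) - (S.card : ℝ) ^ α := by
          rw [hcast]; linarith
        have h0 : (0 : ℝ) ≤ (S'.card : ℝ) := Nat.cast_nonneg _
        have hmono : ((S'.card : ℝ)) ^ (1 - α) ≤ ((S.card : ℝ) - (S.card : ℝ) ^ α) ^ (1 - α) :=
          Real.rpow_le_rpow h0 h1 (by linarith)
        have hkey := key_ineq hα0 hα hm1'
        push_cast
        linarith
      · intro v hv
        by_cases hvI : v ∈ I
        · simp [hvI]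
        · have hv' : v ∈ S' := Finset.mem_sdiff.mpr ⟨hv, hvI⟩
          simp only [hvI, if_false]
          exact Nat.lt_succ_of_lt (hf v hv')
      · intro e heE hec hesub
        by_cases heS' : e ⊆ S'
        · obtain ⟨u, hu, w, hw, hne⟩ := hprop e heE hec heS'
          have huI : u ∉ I := (Finset.mem_sdiff.mp (heS' hu)).2
          have hwI : w ∉ I := (Finset.mem_sdiff.mp (heS' hw)).2
          exact ⟨u, hu, w, hw, by simpa [huI, hwI] using hne⟩
        · have hnotI : ¬ e ⊆ I := hind e heE hec
          obtain ⟨w, hw, hwI⟩ := Finset.not_subset.mp hnotI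
          obtain ⟨u, hu, huS'⟩ := Finset.not_subset.mp heS'
          have huI : u ∈ I := by
            by_contra hc
            exact huS' (Finset.mem_sdiff.mpr ⟨hesub hu, hc⟩)
          have hwS' : w ∈ S' := Finset.mem_sdiff.mpr ⟨hesub hw, hwI⟩
          refine ⟨u, hu, w, hw, ?_⟩
          simp only [huI, if_true, hwI, if_false]
          exact (Nat.ne_of_lt (hf w hwS')).symm

/-- **Lemma.** Let `0 < α ≤ 1/2` and let `G` be a hypergraph on `n` vertices. If every
(induced) subhypergraph of `G` on `m` vertices has an independent set of size at least `m^α`,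
then the chromatic number of `G` is at most `2 n^(1-α)`. -/
theorem chromatic_of_independent_sets {V : Type} [Fintype V] [DecidableEq V]
    (E : Finset (Finset V)) (α : ℝ) (hα0 : 0 < α) (hα : α ≤ 1 / 2)
    (h : ∀ S : Finset V, ∃ I ⊆ S, HypIndep E I ∧ ((S.card : ℝ)) ^ α ≤ (I.card : ℝ)) :
    ∃ k : ℕ, (k : ℝ) ≤ 2 * ((Fintype.card V : ℝ)) ^ (1 - α) ∧ HypColorable E k := by
  obtain ⟨k, hk, f, hf, hprop⟩ :=
    aux_peel E α hα0 hα h (Finset.univ.card) Finset.univ le_rfl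
  rw [Finset.card_univ] at hk
  refine ⟨k, hk, fun v => ⟨f v, hf v (Finset.mem_univ v)⟩, ?_⟩
  intro e heE hec
  obtain ⟨u, hu, w, hw, hne⟩ := hprop e heE hec (Finset.subset_univ e)
  exact ⟨u, hu, w, hw, fun hc => hne (congrArg Fin.val hc)⟩
end

section
/- Let r ≥ 2, k ≥ 1, and let G be an r-graph in which every vertex has degree (number of edges containing it) at most k^{r−1}/(4r). Then the chromatic number of G is at most k. -/
section LLL
variable {V : Type} [Fintype V] [DecidableEq V]

/-- `f` is monochromatic on `e`. -/
def Mono {k : ℕ} (e : Finset V) (f : V → Fin k) : Prop := ∃ c, ∀ v ∈ e, f v = c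

instance {k : ℕ} (e : Finset V) (f : V → Fin k) : Decidable (Mono e f) :=
  decidable_of_iff (∃ c, ∀ v ∈ e, f v = c) Iff.rfl

/-- Number of colorings avoiding monochromatic edges in `S`. -/
def NS (V : Type) [Fintype V] [DecidableEq V] (k : ℕ) (S : Finset (Finset V)) : ℕ :=
  (Finset.univ.filter fun f : V → Fin k => ∀ e ∈ S, ¬ Mono e f).card

/-- Number of colorings monochromatic on `i` avoiding monochromatic edges in `S`. -/
def MS (k : ℕ) (i : Finset V) (S : Finset (Finset V)) : ℕ :=
  (Finset.univ.filter fun f : V → Fin k => Mono i f ∧ ∀ e ∈ S, ¬ Mono e f).card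

lemma MS_anti {k : ℕ} (i : Finset V) {S S' : Finset (Finset V)} (h : S' ⊆ S) :
    MS k i S ≤ MS k i S' := by
  apply Finset.card_le_card
  intro f hf
  simp only [Finset.mem_filter, Finset.mem_univ, true_and] at hf ⊢
  exact ⟨hf.1, fun e he => hf.2 e (h he)⟩

lemma indep {k : ℕ} (i : Finset V) (S : Finset (Finset V)) (hi : i.Nonempty)
    (hdisj : ∀ e ∈ S, Disjoint e i) :
    MS k i S * k ^ i.card ≤ NS V k S * k := by
  obtain ⟨v₀, hv₀⟩ := hi
  have key : ((Finset.univ.filter fun f : V → Fin k => Mono i f ∧ ∀ e ∈ S, ¬ Mono e f) ×ˢ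
      (Finset.univ : Finset (↥i → Fin k))).card ≤
      ((Finset.univ.filter fun f : V → Fin k => ∀ e ∈ S, ¬ Mono e f) ×ˢ
      (Finset.univ : Finset (Fin k))).card := by
    apply Finset.card_le_card_of_injOn
      (fun p => (fun v => if h : v ∈ i then p.2 ⟨v, h⟩ else p.1 v, p.1 v₀))
    · rintro ⟨f, g⟩ hp
      simp only [Finset.mem_coe, Finset.mem_product, Finset.mem_filter, Finset.mem_univ, true_and,
        and_true] at hp ⊢
      intro e he hm
      obtain ⟨c, hc⟩ := hm
      refine hp.2 e he ⟨c, fun v hv => ?_⟩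
      have hvi : v ∉ i := Finset.disjoint_left.mp (hdisj e he) hv
      have := hc v hv
      simpa [hvi] using this
    · rintro ⟨f, g⟩ hp ⟨f', g'⟩ hp' heq
      simp only [Finset.mem_coe, Finset.mem_product, Finset.mem_filter, Finset.mem_univ,
        true_and, and_true] at hp hp'
      obtain ⟨c, hc⟩ := hp.1
      obtain ⟨c', hc'⟩ := hp'.1
      have h2 : f v₀ = f' v₀ := congrArg Prod.snd heq
      have h1 := congrArg Prod.fst heq
      have hfun : ∀ v : V, (if h : v ∈ i then g ⟨v, h⟩ else f v)
          = (if h : v ∈ i then g' ⟨v, h⟩ else f' v) := fun v => congrFun h1 v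
      have hff : f = f' := by
        funext v
        by_cases hv : v ∈ i
        · rw [hc v hv, hc' v hv, ← hc v₀ hv₀, ← hc' v₀ hv₀, h2]
        · simpa [hv] using hfun v
      have hgg : g = g' := by
        funext x
        have := hfun x.1
        simpa [x.2] using this
      rw [hff, hgg]
  have h1 : (Finset.univ : Finset (↥i → Fin k)).card = k ^ i.card := by
    simp [Finset.card_univ, Fintype.card_fun, Fintype.card_coe]
  have h2 : (Finset.univ : Finset (Fin k)).card = k := by simp
  rw [Finset.card_product, Finset.card_product, h1, h2] at key
  exact key

/-- The "one-vertex-conditional-probability" bound: if all edges of `S` are disjoint from `i`,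
with `i.card = r`, then `MS ≤ NS / k^(r-1)`. -/
lemma MS_le_NS {r k : ℕ} (hr : 1 ≤ r) (hk : 1 ≤ k) (i : Finset V) (hicard : i.card = r)
    (S : Finset (Finset V)) (hdisj : ∀ e ∈ S, Disjoint e i) :
    (MS k i S : ℝ) * (k : ℝ) ^ (r - 1) ≤ (NS V k S : ℝ) := by
  have hk0 : (0 : ℝ) < k := by exact_mod_cast hk
  have hi : i.Nonempty := Finset.card_pos.mp (by omega)
  have h := indep (k := k) i S hi hdisj
  rw [hicard] at h
  have hcast : (MS k i S : ℝ) * (k : ℝ) ^ r ≤ (NS V k S : ℝ) * k := by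
    exact_mod_cast h
  have hpow : (k : ℝ) ^ r = (k : ℝ) ^ (r - 1) * k := by
    conv_lhs => rw [show r = (r - 1) + 1 by omega]
    rw [pow_succ]
  rw [hpow, ← mul_assoc] at hcast
  exact le_of_mul_le_mul_right hcast hk0

lemma NS_diff {k : ℕ} (i : Finset V) (S : Finset (Finset V)) :
    NS V k (S.filter fun e => Disjoint e i) ≤ NS V k S +
      ∑ j ∈ (S.filter fun e => ¬ Disjoint e i),
        MS k j (S.filter fun e => Disjoint e i) := by
  classical
  set S₂ := S.filter fun e => Disjoint e i with hS₂
  set S₁ := S.filter fun e => ¬ Disjoint e i with hS₁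
  set A := Finset.univ.filter fun f : V → Fin k => ∀ e ∈ S, ¬ Mono e f with hA
  set A₂ := Finset.univ.filter fun f : V → Fin k => ∀ e ∈ S₂, ¬ Mono e f with hA₂
  have hsub : A ⊆ A₂ := by
    intro f hf
    simp only [hA, hA₂, Finset.mem_filter, Finset.mem_univ, true_and] at hf ⊢
    exact fun e he => hf e (Finset.mem_of_mem_filter e he)
  have hdiff : A₂ \ A ⊆ S₁.biUnion fun j =>
      Finset.univ.filter fun f : V → Fin k => Mono j f ∧ ∀ e ∈ S₂, ¬ Mono e f := by
    intro f hf
    simp only [Finset.mem_sdiff, hA, hA₂, Finset.mem_filter, Finset.mem_univ, true_and] at hf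
    obtain ⟨hgood, hbad⟩ := hf
    push_neg at hbad
    obtain ⟨e, he, hme⟩ := hbad
    have he1 : e ∈ S₁ := by
      rw [hS₁, Finset.mem_filter]
      refine ⟨he, fun hd => ?_⟩
      exact hgood e (by rw [hS₂, Finset.mem_filter]; exact ⟨he, hd⟩) hme
    rw [Finset.mem_biUnion]
    refine ⟨e, he1, ?_⟩
    simp only [Finset.mem_filter, Finset.mem_univ, true_and]
    exact ⟨hme, hgood⟩
  have hcard : A₂.card = (A₂ \ A).card + A.card := by
    rw [Finset.card_sdiff_add_card_eq_card hsub]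
  have hle : (A₂ \ A).card ≤ ∑ j ∈ S₁, MS k j S₂ :=
    le_trans (Finset.card_le_card hdiff) (Finset.card_biUnion_le)
  show A₂.card ≤ A.card + ∑ j ∈ S₁, MS k j S₂
  omega

lemma nbhd_le (E S : Finset (Finset V)) (hSE : S ⊆ E) (i : Finset V) :
    (S.filter fun e => ¬ Disjoint e i).card ≤
      ∑ v ∈ i, (E.filter fun e => v ∈ e).card := by
  refine le_trans (Finset.card_le_card ?_) Finset.card_biUnion_le
  intro e he
  simp only [Finset.mem_filter] at he
  obtain ⟨heS, hnd⟩ := he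
  obtain ⟨v, hvi, hve⟩ := Finset.not_disjoint_iff.mp hnd
  exact Finset.mem_biUnion.mpr ⟨v, hve, Finset.mem_filter.mpr ⟨hSE heS, hvi⟩⟩

lemma lll_main (r k : ℕ) (hr : 2 ≤ r) (hk : 1 ≤ k) (E : Finset (Finset V))
    (hE : IsRGraph r E)
    (hdeg : ∀ v : V, (((E.filter (fun e => v ∈ e)).card : ℝ)) ≤ (k : ℝ) ^ (r - 1) / (4 * r)) :
    ∀ n (S : Finset (Finset V)), S ⊆ E → S.card ≤ n →
      0 < (NS V k S : ℝ) ∧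
      ∀ i ∈ E, (MS k i S : ℝ) * (k : ℝ) ^ (r - 1) ≤ 2 * (NS V k S : ℝ) := by
  haveI : Nonempty (Fin k) := ⟨⟨0, hk⟩⟩
  have hk0 : (0 : ℝ) < k := by exact_mod_cast hk
  have hP : (0 : ℝ) < (k : ℝ) ^ (r - 1) := pow_pos hk0 _
  have hr0 : (0 : ℝ) < r := by positivity
  have hNSempty : 0 < (NS V k (∅ : Finset (Finset V)) : ℝ) := by
    have : (Finset.univ.filter fun f : V → Fin k =>
        ∀ e ∈ (∅ : Finset (Finset V)), ¬ Mono e f) = Finset.univ := by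
      simp
    have hpos : 0 < NS V k (∅ : Finset (Finset V)) := by
      rw [NS, this]
      exact Finset.card_pos.mpr Finset.univ_nonempty
    exact_mod_cast hpos
  -- cardinality of the neighborhood of an edge, in reals
  have hnb : ∀ (S : Finset (Finset V)), S ⊆ E → ∀ i ∈ E,
      ((S.filter fun e => ¬ Disjoint e i).card : ℝ) ≤ (k : ℝ) ^ (r - 1) / 4 := by
    intro S hSE i hi
    have h1 := nbhd_le E S hSE i
    have h2 : (∑ v ∈ i, ((E.filter fun e => v ∈ e).card : ℝ)) ≤
        ∑ v ∈ i, (k : ℝ) ^ (r - 1) / (4 * r) :=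
      Finset.sum_le_sum fun v _ => hdeg v
    have h3 : (∑ v ∈ i, (k : ℝ) ^ (r - 1) / (4 * r)) = (k : ℝ) ^ (r - 1) / 4 := by
      rw [Finset.sum_const, hE i hi, nsmul_eq_mul]
      field_simp
    calc ((S.filter fun e => ¬ Disjoint e i).card : ℝ)
        ≤ (∑ v ∈ i, ((E.filter fun e => v ∈ e).card : ℝ)) := by exact_mod_cast h1
      _ ≤ _ := h2
      _ = _ := h3
  intro n
  induction n with
  | zero =>
    intro S hSE hcard
    have hS : S = ∅ := Finset.card_eq_zero.mp (Nat.le_zero.mp hcard)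
    subst hS
    refine ⟨hNSempty, fun i hi => ?_⟩
    have h := MS_le_NS (V := V) (by omega : 1 ≤ r) hk i (hE i hi) ∅ (by simp)
    nlinarith [Nat.cast_nonneg (α := ℝ) (NS V k (∅ : Finset (Finset V)))]
  | succ n ih =>
    intro S hSE hcard
    have hNS0 : (0 : ℝ) ≤ (NS V k S : ℝ) := Nat.cast_nonneg _
    -- For every i ∈ E: the count over edges disjoint from i is at most twice the full count.
    have main : ∀ i ∈ E,
        (NS V k (S.filter fun e => Disjoint e i) : ℝ) ≤ 2 * (NS V k S : ℝ) := by
      intro i hi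
      by_cases hS₁ : (S.filter fun e => ¬ Disjoint e i).Nonempty
      · have hsplit := Finset.card_filter_add_card_filter_not
          (s := S) (p := fun e => Disjoint e i)
        have hpos1 := Finset.card_pos.mpr hS₁
        have hcard₂ : (S.filter fun e => Disjoint e i).card ≤ n := by omega
        obtain ⟨pos₂, bound₂⟩ := ih (S.filter fun e => Disjoint e i)
          (le_trans (Finset.filter_subset _ _) hSE) hcard₂
        have hdiffR : (NS V k (S.filter fun e => Disjoint e i) : ℝ) ≤
            (NS V k S : ℝ) + ∑ j ∈ (S.filter fun e => ¬ Disjoint e i),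
              (MS k j (S.filter fun e => Disjoint e i) : ℝ) := by
          exact_mod_cast NS_diff i S
        have hterm : ∀ j ∈ (S.filter fun e => ¬ Disjoint e i),
            (MS k j (S.filter fun e => Disjoint e i) : ℝ) ≤
              2 * (NS V k (S.filter fun e => Disjoint e i) : ℝ) / (k : ℝ) ^ (r - 1) := by
          intro j hj
          have hjE : j ∈ E := hSE (Finset.mem_of_mem_filter j hj)
          have := bound₂ j hjE
          rw [le_div_iff₀ hP]
          linarith
        have hsum : (∑ j ∈ (S.filter fun e => ¬ Disjoint e i),
            (MS k j (S.filter fun e => Disjoint e i) : ℝ)) ≤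
            ((S.filter fun e => ¬ Disjoint e i).card : ℝ) *
              (2 * (NS V k (S.filter fun e => Disjoint e i) : ℝ) / (k : ℝ) ^ (r - 1)) := by
          have := Finset.sum_le_card_nsmul (S.filter fun e => ¬ Disjoint e i)
            (fun j => (MS k j (S.filter fun e => Disjoint e i) : ℝ)) _ hterm
          simpa [nsmul_eq_mul] using this
        have hnbi := hnb S hSE i hi
        have hquot : (0 : ℝ) ≤ 2 * (NS V k (S.filter fun e => Disjoint e i) : ℝ) /
            (k : ℝ) ^ (r - 1) := by positivity
        have hfinal : ((S.filter fun e => ¬ Disjoint e i).card : ℝ) *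
            (2 * (NS V k (S.filter fun e => Disjoint e i) : ℝ) / (k : ℝ) ^ (r - 1)) ≤
            ((k : ℝ) ^ (r - 1) / 4) *
            (2 * (NS V k (S.filter fun e => Disjoint e i) : ℝ) / (k : ℝ) ^ (r - 1)) :=
          mul_le_mul_of_nonneg_right hnbi hquot
        have heq : ((k : ℝ) ^ (r - 1) / 4) *
            (2 * (NS V k (S.filter fun e => Disjoint e i) : ℝ) / (k : ℝ) ^ (r - 1)) =
            (NS V k (S.filter fun e => Disjoint e i) : ℝ) / 2 := by
          field_simp
          ring
        rw [heq] at hfinal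
        linarith
      · have heq : S.filter (fun e => Disjoint e i) = S := by
          rw [Finset.filter_eq_self]
          intro e he
          by_contra hd
          exact hS₁ ⟨e, Finset.mem_filter.mpr ⟨he, hd⟩⟩
        rw [heq]
        linarith
    constructor
    · -- positivity
      rcases Finset.eq_empty_or_nonempty S with hS | ⟨i₀, hi₀⟩
      · subst hS; exact hNSempty
      · have hi₀E : i₀ ∈ E := hSE hi₀
        have hi₀ne : i₀.Nonempty := by
          have := hE i₀ hi₀E
          exact Finset.card_pos.mp (by omega)
        have hS₁ : i₀ ∈ S.filter fun e => ¬ Disjoint e i₀ := by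
          refine Finset.mem_filter.mpr ⟨hi₀, fun hd => ?_⟩
          obtain ⟨v, hv⟩ := hi₀ne
          exact Finset.disjoint_left.mp hd hv hv
        have hsplit := Finset.card_filter_add_card_filter_not
          (s := S) (p := fun e => Disjoint e i₀)
        have hpos1 := Finset.card_pos.mpr ⟨i₀, hS₁⟩
        have hcard₂ : (S.filter fun e => Disjoint e i₀).card ≤ n := by omega
        obtain ⟨pos₂, _⟩ := ih (S.filter fun e => Disjoint e i₀)
          (le_trans (Finset.filter_subset _ _) hSE) hcard₂
        have := main i₀ hi₀E
        linarith
    · -- the conditional bound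
      intro i hi
      have hdisj₂ : ∀ e ∈ (S.filter fun e => Disjoint e i), Disjoint e i :=
        fun e he => (Finset.mem_filter.mp he).2
      have h1 : (MS k i S : ℝ) ≤ (MS k i (S.filter fun e => Disjoint e i) : ℝ) := by
        exact_mod_cast MS_anti i (Finset.filter_subset _ _)
      have h2 := MS_le_NS (V := V) (by omega : 1 ≤ r) hk i (hE i hi)
        (S.filter fun e => Disjoint e i) hdisj₂
      have h3 := main i hi
      have h4 : (MS k i S : ℝ) * (k : ℝ) ^ (r - 1) ≤
          (MS k i (S.filter fun e => Disjoint e i) : ℝ) * (k : ℝ) ^ (r - 1) :=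
        mul_le_mul_of_nonneg_right h1 (le_of_lt hP)
      linarith

end LLL

/-- **Lemma (Erdős–Lovász).** If `r ≥ 2`, `k ≥ 1` and `G` is an `r`-graph in which every
vertex has degree at most `k^(r-1)/(4r)`, then the chromatic number of `G` is at most `k`. -/
theorem rgraph_small_degree_colorable {V : Type} [Fintype V] [DecidableEq V]
    (r k : ℕ) (hr : 2 ≤ r) (hk : 1 ≤ k)
    (E : Finset (Finset V)) (hE : IsRGraph r E)
    (hdeg : ∀ v : V, (((E.filter (fun e => v ∈ e)).card : ℝ)) ≤ (k : ℝ) ^ (r - 1) / (4 * r)) :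
    HypColorable E k := by
  have hmain := lll_main r k hr hk E hE hdeg E.card E (le_refl _) (le_refl _)
  have hpos : 0 < NS V k E := by exact_mod_cast hmain.1
  obtain ⟨f, hf⟩ := Finset.card_pos.mp hpos
  simp only [Finset.mem_filter, Finset.mem_univ, true_and] at hf
  refine ⟨f, fun e he hcard => ?_⟩
  have hne : e.Nonempty := Finset.card_pos.mp (by omega)
  obtain ⟨u, hu⟩ := hne
  have hnm := hf e he
  rw [Mono] at hnm
  push_neg at hnm
  obtain ⟨v, hv, hvu⟩ := hnm (f u)
  exact ⟨v, hv, u, hu, hvu⟩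
end

section
/- Fix r ≥ 3 and n ≥ 1. Suppose that for each i ∈ {1, …, n} the set {i+1, …, n} is partitioned into r−1 (possibly empty) parts V^i_1, …, V^i_{r−1}, and let G be the r-graph on vertex set {1, …, n} whose edges are exactly the sets {i, v_1, …, v_{r−1}} with i < v_j and v_j ∈ V^i_j for every j ∈ {1, …, r−1}. Then G contains no copy of K_{r+1}^r: every set of r+1 vertices of G misses at least one edge of the complete r-graph on those vertices. -/
/-- **Lemma (the construction is `K_{r+1}^r`-free).** Fix `r ≥ 3` and `n ≥ 1`. For each
vertex `i` of `Fin n`, partition the later vertices into `r-1` parts, part membership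
being recorded by `c i : Fin n → Fin (r-1)`. Let `G` be the `r`-graph whose edges are the
sets `{i, v₁, …, v_{r-1}}` with `i < vⱼ` and `vⱼ` in the `j`-th part of `i` for each `j`
(equivalently: `r`-sets `e` whose minimum `i` is such that the part function `c i` is
injective on `e \ {i}`). Then any `r+1` vertices of `G` miss at least one edge of the
complete `r`-graph on them. -/
theorem construction_clique_free (r n : ℕ) (hr : 3 ≤ r) (hn : 1 ≤ n)
    (c : Fin n → Fin n → Fin (r - 1)) :
    ∀ S : Finset (Fin n), S.card = r + 1 →
      ∃ e ⊆ S, e.card = r ∧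
        ¬ (∃ i ∈ e, (∀ j ∈ e, i ≤ j) ∧ Set.InjOn (c i) ↑(e \ {i})) := by
  intro S hS
  have hSne : S.Nonempty := by
    rw [← Finset.card_pos, hS]; omega
  set x0 := S.min' hSne with hx0
  have hx0S : x0 ∈ S := S.min'_mem hSne
  -- pigeonhole on S.erase x0
  have hcard_erase : (S.erase x0).card = r := by
    rw [Finset.card_erase_of_mem hx0S, hS]; omega
  obtain ⟨y, hy, z, hz, hyz, hcyz⟩ :
      ∃ y ∈ S.erase x0, ∃ z ∈ S.erase x0, y ≠ z ∧ c x0 y = c x0 z := by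
    apply Finset.exists_ne_map_eq_of_card_lt_of_maps_to (t := (Finset.univ : Finset (Fin (r-1))))
    · rw [hcard_erase, Finset.card_univ, Fintype.card_fin]; omega
    · intro a _; exact Finset.mem_univ _
  -- pick w ∈ S \ {x0, y, z}
  have hw : (S \ {x0, y, z}).Nonempty := by
    rw [← Finset.card_pos]
    have h1 : (S \ {x0, y, z}).card ≥ S.card - ({x0, y, z} : Finset (Fin n)).card :=
      Finset.le_card_sdiff _ _
    have h2 : ({x0, y, z} : Finset (Fin n)).card ≤ 3 := by
      apply le_trans (Finset.card_insert_le _ _)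
      simp [Finset.card_insert_le]
      have := Finset.card_le_two (a := y) (b := z); omega
    omega
  obtain ⟨w, hwmem⟩ := hw
  rw [Finset.mem_sdiff] at hwmem
  obtain ⟨hwS, hwnot⟩ := hwmem
  simp only [Finset.mem_insert, Finset.mem_singleton, not_or] at hwnot
  obtain ⟨hwx0, hwy, hwz⟩ := hwnot
  refine ⟨S.erase w, Finset.erase_subset _ _, ?_, ?_⟩
  · rw [Finset.card_erase_of_mem hwS, hS]; omega
  · rintro ⟨i, hie, hmin, hinj⟩
    have hieS : i ∈ S := Finset.mem_of_mem_erase hie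
    have hx0e : x0 ∈ S.erase w := Finset.mem_erase.mpr ⟨fun h => hwx0 h.symm, hx0S⟩
    have hix0 : i = x0 := le_antisymm (hmin x0 hx0e) (S.min'_le i hieS)
    subst hix0
    have hye : y ∈ (↑(S.erase w \ {x0}) : Set (Fin n)) := by
      simp only [Finset.coe_sdiff, Finset.coe_erase, Set.mem_diff, Set.mem_singleton_iff]
      constructor
      · exact ⟨Finset.mem_of_mem_erase hy, fun h => hwy h.symm⟩
      · simpa using Finset.ne_of_mem_erase hy
    have hze : z ∈ (↑(S.erase w \ {x0}) : Set (Fin n)) := by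
      simp only [Finset.coe_sdiff, Finset.coe_erase, Set.mem_diff, Set.mem_singleton_iff]
      constructor
      · exact ⟨Finset.mem_of_mem_erase hz, fun h => hwz h.symm⟩
      · simpa using Finset.ne_of_mem_erase hz
    exact hyz (hinj hye hze hcyz)
end

section
/- For every k ≥ 1, the minimum number of edges of a graph with chromatic number greater than k equals (k+1 choose 2) = k(k+1)/2. That is, every graph with fewer than k(k+1)/2 edges is properly k-colorable, and the complete graph K_{k+1} has exactly k(k+1)/2 edges and chromatic number k+1. -/
open Finset SimpleGraph

private lemma key_color (k : ℕ) : ∀ (n : ℕ) (V : Type) [Fintype V] [DecidableEq V]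
    (G : SimpleGraph V) [DecidableRel G.Adj], Fintype.card V = n →
    G.edgeFinset.card < k * (k + 1) / 2 → G.Colorable k := by
  intro n
  induction n using Nat.strong_induction_on with
  | _ n ih =>
    intro V _ _ G _ hcard he
    rcases Nat.eq_zero_or_pos n with hn | hn
    · have hE : IsEmpty V := Fintype.card_eq_zero_iff.mp (by omega)
      exact ⟨SimpleGraph.Coloring.mk (fun u => isEmptyElim u) (fun {a b} h => isEmptyElim a)⟩
    by_cases hdeg : ∃ v, G.degree v < k
    · obtain ⟨v, hv⟩ := hdeg
      set s : Set V := {v}ᶜ with hs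
      have hmem : ∀ u, G.Adj v u → u ∈ s := fun u h => (G.ne_of_adj h).symm
      haveI : DecidableRel (G.induce s).Adj := fun a b => ‹DecidableRel G.Adj› _ _
      have hcards : Fintype.card s = n - 1 := by
        have := Fintype.card_compl_set ({v} : Set V)
        simpa [hcard, hs] using this
      have hle : (G.induce s).edgeFinset.card ≤ G.edgeFinset.card := by
        rw [edgeFinset_card, edgeFinset_card]
        exact Fintype.card_le_of_embedding
          (SimpleGraph.Embedding.mapEdgeSet (SimpleGraph.Embedding.induce s))
      obtain ⟨C⟩ := ih (n - 1) (by omega) s (G.induce s) hcards (lt_of_le_of_lt hle he)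
      -- colors used by neighbors of v
      set N := G.neighborFinset v with hN
      have pf : ∀ u ∈ N, u ∈ s := fun u hu => hmem u (by rwa [hN, mem_neighborFinset] at hu)
      set S : Finset (Fin k) := N.attach.image (fun u => C ⟨u.1, pf u.1 u.2⟩) with hS
      have hScard : S.card < k := by
        calc S.card ≤ N.attach.card := card_image_le
          _ = G.degree v := by rw [card_attach]; exact card_neighborFinset_eq_degree G v
          _ < k := hv
      have : ∃ c : Fin k, c ∉ S := by
        by_contra h
        push_neg at h
        have : (univ : Finset (Fin k)) ⊆ S := fun c _ => h c
        have := card_le_card this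
        simp only [card_univ, Fintype.card_fin] at this
        omega
      obtain ⟨c, hc⟩ := this
      refine ⟨SimpleGraph.Coloring.mk
        (fun u => if h : u = v then c else C ⟨u, h⟩) ?_⟩
      intro a b hab
      by_cases ha : a = v <;> by_cases hb : b = v
      · exact absurd (ha.trans hb.symm) hab.ne
      · subst ha
        beta_reduce; rw [dif_pos rfl, dif_neg hb]
        have hbN : b ∈ N := by rw [hN, mem_neighborFinset]; exact hab
        have hmemS : C ⟨b, pf b hbN⟩ ∈ S :=
          mem_image_of_mem _ (mem_attach N ⟨b, hbN⟩)
        intro hcontra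
        apply hc; rw [hcontra]; exact hmemS
      · subst hb
        beta_reduce; rw [dif_pos rfl, dif_neg ha]
        have haN : a ∈ N := by rw [hN, mem_neighborFinset]; exact hab.symm
        have hmemS : C ⟨a, pf a haN⟩ ∈ S :=
          mem_image_of_mem _ (mem_attach N ⟨a, haN⟩)
        intro hcontra
        apply hc; rw [← hcontra]; exact hmemS
      · simp only [dif_neg ha, dif_neg hb]
        exact C.valid hab
    · exfalso
      push_neg at hdeg
      obtain ⟨v⟩ : Nonempty V := Fintype.card_pos_iff.mp (by omega)
      have hnk : k + 1 ≤ n := by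
        have h1 := hdeg v
        have h2 := G.degree_lt_card_verts v
        omega
      have hsum : ∑ u : V, G.degree u = 2 * G.edgeFinset.card :=
        G.sum_degrees_eq_twice_card_edges
      have hge : n * k ≤ ∑ u : V, G.degree u := by
        calc n * k = ∑ _u : V, k := by rw [Finset.sum_const, card_univ, hcard, smul_eq_mul]
          _ ≤ ∑ u : V, G.degree u := Finset.sum_le_sum (fun u _ => hdeg u)
      have : k * (k + 1) ≤ 2 * G.edgeFinset.card := by nlinarith
      omega

/-- **Proposition.** `m_k(2) = (k+1 choose 2)`: every graph with fewer than `k(k+1)/2`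
edges is properly `k`-colorable, while the complete graph on `k+1` vertices has exactly
`k(k+1)/2` edges and chromatic number `k+1`. -/
theorem mk_two (k : ℕ) (hk : 1 ≤ k) :
    (∀ (V : Type) [Fintype V] [DecidableEq V] (G : SimpleGraph V) [DecidableRel G.Adj],
      G.edgeFinset.card < k * (k + 1) / 2 → G.Colorable k) ∧
    (⊤ : SimpleGraph (Fin (k + 1))).edgeFinset.card = k * (k + 1) / 2 ∧
    (⊤ : SimpleGraph (Fin (k + 1))).chromaticNumber = (k + 1 : ℕ) := by
  refine ⟨fun V _ _ G _ he => key_color k _ V G rfl he, ?_, ?_⟩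
  · rw [SimpleGraph.card_edgeFinset_top_eq_card_choose_two, Fintype.card_fin,
      Nat.choose_two_right]
    simp [Nat.mul_comm]
  · rw [SimpleGraph.chromaticNumber_top, Fintype.card_fin]
end

section
/- Let r ≥ 3 and let H be an r-graph that contains a cycle, i.e., there exist t ≥ 2 distinct vertices x_1, …, x_t and t distinct edges E_1, …, E_t of H with {x_i, x_{i+1}} ⊆ E_i for each i (indices modulo t). Then ρ(H) > 1/(r−1). -/
/-- The hypergraph `E` contains a cycle: `t ≥ 2` distinct vertices `x₁, …, x_t` and `t`
distinct edges `E₁, …, E_t` with `{xᵢ, xᵢ₊₁} ⊆ Eᵢ` for each `i` (indices mod `t`). -/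
def HasHypCycle {V : Type*} (E : Finset (Finset V)) : Prop :=
  ∃ t : ℕ, 2 ≤ t ∧ ∃ x : ZMod t → V, Function.Injective x ∧
    ∃ Ed : ZMod t → Finset V, Function.Injective Ed ∧
      ∀ i : ZMod t, Ed i ∈ E ∧ x i ∈ Ed i ∧ x (i + 1) ∈ Ed i

/-- **Lemma.** Let `r ≥ 3` and let `H` be an `r`-graph containing a cycle. Then
`ρ(H) > 1/(r-1)`, i.e. some nontrivial subhypergraph `H'` of `H`, with `e'` edges spanning
`v'` vertices, satisfies `(e'-1)/(v'-r) > 1/(r-1)`. -/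
theorem cycle_rho_gt {V : Type} [DecidableEq V] (r : ℕ) (hr : 3 ≤ r)
    (E : Finset (Finset V)) (hE : IsRGraph r E) (hcyc : HasHypCycle E) :
    ∃ E' ⊆ E, 2 ≤ E'.card ∧
      1 / ((r : ℝ) - 1) <
        ((E'.card : ℝ) - 1) / (((E'.sup id).card : ℝ) - (r : ℝ)) := by
  obtain ⟨t, ht, x, hx, Ed, hEd, hprop⟩ := hcyc
  haveI : NeZero t := ⟨by omega⟩
  haveI : Fact (1 < t) := ⟨by omega⟩
  set E' : Finset (Finset V) := Finset.image Ed Finset.univ with hE'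
  have hsub : E' ⊆ E := by
    intro e he
    simp only [hE', Finset.mem_image] at he
    obtain ⟨i, _, rfl⟩ := he
    exact (hprop i).1
  have hcard : E'.card = t := by
    rw [hE', Finset.card_image_of_injective _ hEd, Finset.card_univ, ZMod.card]
  set S : Finset V := E'.sup id with hS
  have hSup : S = Finset.univ.sup Ed := by
    rw [hS, hE', Finset.sup_image]; rfl
  have hne : ∀ i : ZMod t, x i ≠ x (i + 1) := by
    intro i h
    have := hx h
    have : (0 : ZMod t) = 1 := by
      have := congrArg (fun j => j - i) this
      simp at this
    exact zero_ne_one this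
  -- upper bound on |S|
  have hSle : S.card ≤ t * (r - 1) := by
    have hsubset : S ⊆ (Finset.univ.biUnion (fun i : ZMod t => Ed i \ {x i, x (i + 1)})) ∪
        Finset.image x Finset.univ := by
      rw [hSup]
      intro v hv
      rw [Finset.mem_sup] at hv
      obtain ⟨i, _, hvi⟩ := hv
      by_cases hc : v = x i ∨ v = x (i + 1)
      · apply Finset.mem_union_right
        rcases hc with h | h <;> · rw [h]; exact Finset.mem_image_of_mem _ (Finset.mem_univ _)
      · push_neg at hc
        apply Finset.mem_union_left
        rw [Finset.mem_biUnion]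
        exact ⟨i, Finset.mem_univ _, by simp [hvi, hc.1, hc.2]⟩
    have h1 : (Finset.univ.biUnion (fun i : ZMod t => Ed i \ {x i, x (i + 1)})).card ≤
        t * (r - 2) := by
      refine le_trans (Finset.card_biUnion_le) ?_
      have : ∀ i : ZMod t, (Ed i \ {x i, x (i + 1)}).card ≤ r - 2 := by
        intro i
        have hpair : ({x i, x (i + 1)} : Finset V) ⊆ Ed i := by
          intro v hv
          rcases Finset.mem_insert.mp hv with h | h
          · rw [h]; exact (hprop i).2.1
          · rw [Finset.mem_singleton.mp h]; exact (hprop i).2.2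
        rw [Finset.card_sdiff_of_subset hpair, hE _ ((hprop i).1),
          Finset.card_insert_of_notMem (by simp [hne i]), Finset.card_singleton]
      calc (∑ i : ZMod t, (Ed i \ {x i, x (i + 1)}).card) ≤ ∑ _i : ZMod t, (r - 2) :=
            Finset.sum_le_sum (fun i _ => this i)
        _ = t * (r - 2) := by rw [Finset.sum_const, Finset.card_univ, ZMod.card, smul_eq_mul]
    have h2 : (Finset.image x Finset.univ).card ≤ t := by
      refine le_trans Finset.card_image_le ?_
      rw [Finset.card_univ, ZMod.card]
    calc S.card ≤ _ := Finset.card_le_card hsubset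
      _ ≤ t * (r - 2) + t := le_trans (Finset.card_union_le _ _) (by omega)
      _ ≤ t * (r - 1) := by
          obtain ⟨s, rfl⟩ : ∃ s, r = s + 3 := ⟨r - 3, by omega⟩
          simp only [Nat.add_sub_cancel, show s + 3 - 2 = s + 1 from rfl,
            show s + 3 - 1 = s + 2 from rfl]
          rw [Nat.mul_succ t (s + 1)]
  -- lower bound on |S|
  have hSgt : r < S.card := by
    have h01 : Ed 0 ≠ Ed 1 := fun h => zero_ne_one (hEd h)
    have hsub0 : Ed 0 ⊆ S := by
      rw [hSup]; intro v hv; rw [Finset.mem_sup]; exact ⟨0, Finset.mem_univ _, hv⟩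
    have hsub1 : Ed 1 ⊆ S := by
      rw [hSup]; intro v hv; rw [Finset.mem_sup]; exact ⟨1, Finset.mem_univ _, hv⟩
    have hssub : Ed 0 ⊂ Ed 0 ∪ Ed 1 := by
      refine Finset.ssubset_iff_of_subset Finset.subset_union_left |>.mpr ?_
      by_contra hcon
      push_neg at hcon
      have : Ed 1 ⊆ Ed 0 := by
        intro v hv
        exact hcon v (Finset.mem_union_right _ hv)
      exact h01 (Finset.eq_of_subset_of_card_le this
        (by rw [hE _ ((hprop 0).1), hE _ ((hprop 1).1)])).symm
    calc r = (Ed 0).card := (hE _ ((hprop 0).1)).symm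
      _ < (Ed 0 ∪ Ed 1).card := Finset.card_lt_card hssub
      _ ≤ S.card := Finset.card_le_card (Finset.union_subset hsub0 hsub1)
  refine ⟨E', hsub, by omega, ?_⟩
  rw [hcard]
  have hr1 : (0 : ℝ) < (r : ℝ) - 1 := by
    have : (3 : ℝ) ≤ (r : ℝ) := by exact_mod_cast hr
    linarith
  have hden : (0 : ℝ) < (S.card : ℝ) - (r : ℝ) := by
    have : (r : ℝ) < (S.card : ℝ) := by exact_mod_cast hSgt
    linarith
  rw [div_lt_div_iff₀ hr1 hden]
  have hSleR : (S.card : ℝ) ≤ (t : ℝ) * ((r : ℝ) - 1) := by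
    have := hSle
    have h' : (S.card : ℝ) ≤ ((t * (r - 1) : ℕ) : ℝ) := by exact_mod_cast this
    rwa [Nat.cast_mul, Nat.cast_sub (by omega : 1 ≤ r), Nat.cast_one] at h'
  have ht2 : (2 : ℝ) ≤ (t : ℝ) := by exact_mod_cast ht
  have hr3 : (3 : ℝ) ≤ (r : ℝ) := by exact_mod_cast hr
  nlinarith [hSleR, ht2, hr3]
end
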